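/- arXiv:1511.04135 — 2 statements merged into one kernel-verified Lean document; each statement's English description precedes it below -/
import Mathlib

section
/- In the Hecke algebra of the infinite dihedral group, for m ≥ 3, x^{(m)}_{(2,1)} · x_2 x_1 = x^{(m+2)}_{(2,1)} + 2q·x^{(m)}_{(2,1)} + q²·x^{(m−2)}_{(2,1)}, where x_i = T_i + 1 and x^{(m)}_{(2,1)} = 1 + Σ_{i=1}^{m−1}(T_{[i]1} + T_{[i]2}) + T_{[m]1}. -/
open Polynomial

/-- `altPair a b n = (T_{[n]a}, T_{[n]b})`: the pair of alternating products of `n`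
factors from `{a, b}`, ending in `a` (resp. in `b`). -/
def altPair {A : Type} [Ring A] (a b : A) : ℕ → A × A
  | 0 => (1, 1)
  | n + 1 => ((altPair a b n).2 * a, (altPair a b n).1 * b)

/-- `xword T1 T2 m = x^{(m)}_{(2,1)} = 1 + Σ_{i=1}^{m−1}(T_{[i]1} + T_{[i]2}) + T_{[m]1}`. -/
def xword {A : Type} [Ring A] (T1 T2 : A) (m : ℕ) : A :=
  1 + (∑ i ∈ Finset.Icc 1 (m - 1), ((altPair T1 T2 i).1 + (altPair T1 T2 i).2))
    + (altPair T1 T2 m).1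

/-!
Write `xᵢ = Tᵢ + 1`, so that `Tᵢxᵢ = q xᵢ` and `xᵢ² = (q + 1)xᵢ`. As `T_{[j+1]1} = T_{[j]2}T₁`,
the element `x^{(m)}_{(2,1)}` is the sum of the terms `T_{[j]2}x₁` over `j < m`.
Writing `T_{[j]2} = T_{[j-2]2}T₁T₂` and expanding `T₂x₁ · x₂x₁` with the quadratic relation
gives, for `j ≥ 2`,
`T_{[j]2}x₁ · x₂x₁ = T_{[j+2]2}x₁ + 2q T_{[j]2}x₁ + q² T_{[j-2]2}x₁`,
while the first two terms add up to `x₂x₁`, whose square is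
`(1 + T₂ + T₁T₂ + T₂T₁T₂)x₁ + 2q x₂x₁`. Summing over `j` gives the identity.
-/

section HeckeRelation

variable {A : Type*} [Ring A] {q T : A}

theorem mul_add_one_of_sq_eq (h : T ^ 2 = (q - 1) * T + q) : T * (T + 1) = q * (T + 1) := by
  rw [mul_add, mul_one, ← sq, h]
  noncomm_ring

theorem add_one_mul_self_of_sq_eq (h : T ^ 2 = (q - 1) * T + q) :
    (T + 1) * (T + 1) = (q + 1) * (T + 1) := by
  rw [add_mul _ 1, mul_add_one_of_sq_eq h]
  noncomm_ring

end HeckeRelation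

theorem altPair_succ_fst {A : Type} [Ring A] (a b : A) (n : ℕ) :
    (altPair a b (n + 1)).1 = (altPair a b n).2 * a := rfl

theorem altPair_succ_succ_snd {A : Type} [Ring A] (a b : A) (n : ℕ) :
    (altPair a b (n + 2)).2 = (altPair a b n).2 * a * b := rfl

/-- The term `T_{[j]2} x₁` of `x^{(m)}_{(2,1)}`. -/
def xwordTerm {A : Type} [Ring A] (T1 T2 : A) (j : ℕ) : A :=
  (altPair T1 T2 j).2 * (T1 + 1)

theorem xword_one {A : Type} [Ring A] (T1 T2 : A) : xword T1 T2 1 = xwordTerm T1 T2 0 := by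
  simp [xword, xwordTerm, altPair, add_comm]

theorem xword_succ_succ {A : Type} [Ring A] (T1 T2 : A) (n : ℕ) :
    xword T1 T2 (n + 2) = xword T1 T2 (n + 1) + xwordTerm T1 T2 (n + 1) := by
  simp only [xword, xwordTerm, Nat.add_sub_cancel, Nat.add_succ_sub_one]
  rw [Finset.sum_Icc_succ_top (Nat.le_add_left 1 n), altPair_succ_fst, altPair_succ_fst]
  noncomm_ring

theorem xword_succ_eq_sum {A : Type} [Ring A] (T1 T2 : A) (n : ℕ) :
    xword T1 T2 (n + 1) = ∑ j ∈ Finset.range (n + 1), xwordTerm T1 T2 j := by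
  induction n with
  | zero => simp [xword_one]
  | succ n ih => rw [xword_succ_succ, ih, Finset.sum_range_succ _ (n + 1)]

theorem mul_add_one_mul_x2x1 {A : Type*} [Ring A] {T1 T2 q : A} (hq : Commute q T2)
    (h1 : T1 ^ 2 = (q - 1) * T1 + q) (h2 : T2 ^ 2 = (q - 1) * T2 + q) :
    T2 * (T1 + 1) * ((T2 + 1) * (T1 + 1))
      = T2 * T1 * T2 * (T1 + 1) + 2 * q * (T2 * (T1 + 1)) + q * (T1 + 1) := by
  calc T2 * (T1 + 1) * ((T2 + 1) * (T1 + 1))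
      = T2 * ((T1 + 1) * (T1 + 1)) + T2 ^ 2 * (T1 + 1) + T2 * T1 * T2 * (T1 + 1) := by
        noncomm_ring
    _ = T2 * (q + 1) * (T1 + 1) + ((q - 1) * T2 + q) * (T1 + 1) + T2 * T1 * T2 * (T1 + 1) := by
        rw [add_one_mul_self_of_sq_eq h1, h2, ← mul_assoc T2 (q + 1)]
    _ = _ := by
        rw [← (hq.add_left (Commute.one_left T2)).eq]
        noncomm_ring

theorem x2x1_mul_self {A : Type*} [Ring A] {T1 T2 q : A} (hq : Commute q T2)
    (h1 : T1 ^ 2 = (q - 1) * T1 + q) (h2 : T2 ^ 2 = (q - 1) * T2 + q) :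
    (T2 + 1) * (T1 + 1) * ((T2 + 1) * (T1 + 1))
      = (T1 + 1) + T2 * (T1 + 1) + T1 * T2 * (T1 + 1) + T2 * T1 * T2 * (T1 + 1)
        + 2 * q * ((T2 + 1) * (T1 + 1)) := by
  calc (T2 + 1) * (T1 + 1) * ((T2 + 1) * (T1 + 1))
      = T2 * (T1 + 1) * ((T2 + 1) * (T1 + 1))
        + ((T1 + 1) * (T1 + 1) + T2 * (T1 + 1) + T1 * T2 * (T1 + 1)) := by
        noncomm_ring
    _ = _ := by
        rw [mul_add_one_mul_x2x1 hq h1 h2, add_one_mul_self_of_sq_eq h1]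
        noncomm_ring

section Centre

variable {A : Type} [Ring A] {T1 T2 q : A} (hq : ∀ a : A, Commute q a)
  (h1 : T1 ^ 2 = (q - 1) * T1 + q) (h2 : T2 ^ 2 = (q - 1) * T2 + q)
include hq h1 h2

theorem xwordTerm_add_two_mul_x2x1 (j : ℕ) :
    xwordTerm T1 T2 (j + 2) * ((T2 + 1) * (T1 + 1))
      = xwordTerm T1 T2 (j + 4) + 2 * q * xwordTerm T1 T2 (j + 2)
        + q ^ 2 * xwordTerm T1 T2 j := by
  set u := (altPair T1 T2 j).2
  have hu : ∀ x, u * (q * x) = q * (u * x) := fun x => ((hq u).left_comm x).symm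
  have hT1 : ∀ x, T1 * (q * x) = q * (T1 * x) := fun x => ((hq T1).left_comm x).symm
  calc xwordTerm T1 T2 (j + 2) * ((T2 + 1) * (T1 + 1))
      = u * T1 * (T2 * (T1 + 1) * ((T2 + 1) * (T1 + 1))) := by
        simp only [xwordTerm, altPair_succ_succ_snd, u, mul_assoc]
    _ = u * T1 * (T2 * T1 * T2 * (T1 + 1)) + 2 * q * (u * T1 * (T2 * (T1 + 1)))
          + q * (u * (T1 * (T1 + 1))) := by
        rw [mul_add_one_mul_x2x1 (hq T2) h1 h2]
        simp only [mul_add, add_mul, mul_assoc, two_mul, hu, hT1]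
    _ = _ := by
        rw [mul_add_one_of_sq_eq h1, hu, ← mul_assoc q q, ← sq]
        simp only [xwordTerm, altPair_succ_succ_snd, u, mul_assoc]

theorem sum_range_xwordTerm_mul_x2x1 (n : ℕ) :
    (∑ j ∈ Finset.range (n + 2), xwordTerm T1 T2 j) * ((T2 + 1) * (T1 + 1))
      = ∑ j ∈ Finset.range (n + 4), xwordTerm T1 T2 j
        + 2 * q * ∑ j ∈ Finset.range (n + 2), xwordTerm T1 T2 j
        + q ^ 2 * ∑ j ∈ Finset.range n, xwordTerm T1 T2 j := by
  induction n with
  | zero =>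
    simp only [Finset.sum_range_succ, Finset.sum_range_zero, xwordTerm, altPair, zero_add,
      one_mul, mul_zero, add_zero]
    rw [show T1 + 1 + T2 * (T1 + 1) = (T2 + 1) * (T1 + 1) by noncomm_ring,
      x2x1_mul_self (hq T2) h1 h2]
    noncomm_ring
  | succ n ih =>
    rw [Finset.sum_range_succ _ (n + 2), add_mul, ih, xwordTerm_add_two_mul_x2x1 hq h1 h2,
      Finset.sum_range_succ _ (n + 4), Finset.sum_range_succ _ n]
    noncomm_ring

end Centre

/-- In the Hecke algebra of the infinite dihedral group, for `m ≥ 3`,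
`x^{(m)}_{(2,1)} · x₂x₁ = x^{(m+2)}_{(2,1)} + 2q·x^{(m)}_{(2,1)} + q²·x^{(m−2)}_{(2,1)}`,
where `xᵢ = Tᵢ + 1`. -/
theorem stmt4 (A : Type) [Ring A] [Algebra (Polynomial ℤ) A]
    (T1 T2 : A) (q : A) (hq : q = algebraMap (Polynomial ℤ) A X)
    (h1 : T1 ^ 2 = (q - 1) * T1 + q) (h2 : T2 ^ 2 = (q - 1) * T2 + q)
    (m : ℕ) (hm : 3 ≤ m) :
    xword T1 T2 m * ((T2 + 1) * (T1 + 1))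
      = xword T1 T2 (m + 2) + 2 * q * xword T1 T2 m + q ^ 2 * xword T1 T2 (m - 2) := by
  have hcentral : ∀ a : A, Commute q a := fun a => hq ▸ Algebra.commute_algebraMap_left X a
  obtain ⟨n, rfl⟩ := Nat.exists_eq_add_of_le' hm
  rw [show n + 3 - 2 = n + 1 by omega, show n + 3 + 2 = n + 4 + 1 from rfl,
    show n + 3 = n + 2 + 1 from rfl, xword_succ_eq_sum, xword_succ_eq_sum, xword_succ_eq_sum]
  exact sum_range_xwordTerm_mul_x2x1 hcentral h1 h2 (n + 1)
end

section
/- In the 0-Hecke algebra H_0, for any finitary subsets I, J of S, c_{w_I}·c_{w_J} = c_{w_{I,J}}, where w_{I,J} is the longest element of the double coset W_I W_J. -/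
/-!
The elements `c_s = T_s + 1` are idempotents, and `c_w` multiplies along reduced words. Hence
`c_d * c_s = c_d` whenever `s` is a right descent of `d`, and then `c_d * c_{s w} = c_d * c_w` for
every `w`: multiplying the second factor on the left by an element of `W_I` is invisible as soon
as every `s ∈ I` is a right descent of `d`; the mirror statement follows by applying this to
`w ↦ c_{w⁻¹}` with values in the opposite ring. Write `w_{I,J} = a b` with `a ∈ W_I`, `b ∈ W_J`.
By maximality, `I` consists of right descents of `w_I` and of left descents of `w_{I,J}`, and
symmetrically for `J`, so
`c_{w_I} c_{w_J} = c_{w_I} c_b c_{w_J} = c_{w_I} c_{a b} c_{w_J} = c_{w_I} c_{w_{I,J}} c_{w_J} = c_{w_{I,J}}`.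
-/

open Pointwise
/-- A realization of the 0-Hecke algebra of the Coxeter system `cs` over `ℤ`. -/
structure ZeroHeckeData {B W : Type} [Group W] {M : CoxeterMatrix B}
    (cs : CoxeterSystem M W) (H : Type) [Ring H] [Algebra ℤ H] where
  T : Module.Basis W ℤ H
  T_one : T 1 = 1
  T_mul_of_lt : ∀ (i : B) (w : W), cs.length (cs.simple i * w) < cs.length w →
    T (cs.simple i) * T w = -T w
  T_mul_of_gt : ∀ (i : B) (w : W), cs.length w < cs.length (cs.simple i * w) →
    T (cs.simple i) * T w = T (cs.simple i * w)

namespace CoxeterSystem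

variable {B W : Type*} [Group W] {M : CoxeterMatrix B} {cs : CoxeterSystem M W}

variable (cs) in
theorem isLeftDescent_of_length_simple_mul_le {w : W} {i : B}
    (h : cs.length (cs.simple i * w) ≤ cs.length w) : cs.IsLeftDescent w i :=
  lt_of_le_of_ne h (cs.length_simple_mul_ne w i)

variable (cs) in
theorem isRightDescent_of_length_mul_simple_le {w : W} {i : B}
    (h : cs.length (w * cs.simple i) ≤ cs.length w) : cs.IsRightDescent w i :=
  lt_of_le_of_ne h (cs.length_mul_simple_ne w i)

variable (cs) in
/-- The properties of `w ↦ c_w` in the 0-Hecke algebra that the argument uses; they say that `c`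
behaves like a map out of the 0-Hecke monoid of `W`. -/
structure IsZeroHeckeMap {R : Type*} [Monoid R] (c : W → R) : Prop where
  map_one : c 1 = 1
  map_mul_of_length_add : ∀ x y : W,
    cs.length (x * y) = cs.length x + cs.length y → c (x * y) = c x * c y
  map_simple_mul_self : ∀ i : B, c (cs.simple i) * c (cs.simple i) = c (cs.simple i)

namespace IsZeroHeckeMap

variable {R : Type*} [Monoid R] {c : W → R} (hc : cs.IsZeroHeckeMap c)
include hc

theorem op : cs.IsZeroHeckeMap fun w => MulOpposite.op (c w⁻¹) where
  map_one := by simp [hc.map_one]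
  map_mul_of_length_add x y h := by
    have h' : cs.length (y⁻¹ * x⁻¹) = cs.length y⁻¹ + cs.length x⁻¹ := by
      rw [← mul_inv_rev, cs.length_inv, cs.length_inv, cs.length_inv, h, add_comm]
    rw [mul_inv_rev, hc.map_mul_of_length_add _ _ h', MulOpposite.op_mul]
  map_simple_mul_self i := by
    rw [inv_simple, ← MulOpposite.op_mul, hc.map_simple_mul_self]

theorem map_simple_mul_of_not_isLeftDescent {w : W} {i : B} (h : ¬cs.IsLeftDescent w i) :
    c (cs.simple i * w) = c (cs.simple i) * c w := by
  refine hc.map_mul_of_length_add _ _ ?_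
  rw [cs.not_isLeftDescent_iff.mp h, cs.length_simple, add_comm]

theorem map_mul_simple_of_not_isRightDescent {w : W} {i : B} (h : ¬cs.IsRightDescent w i) :
    c (w * cs.simple i) = c w * c (cs.simple i) := by
  refine hc.map_mul_of_length_add _ _ ?_
  rw [cs.not_isRightDescent_iff.mp h, length_simple]

theorem map_mul_map_simple_of_isRightDescent {d : W} {i : B} (h : cs.IsRightDescent d i) :
    c d * c (cs.simple i) = c d := by
  have hd : c d = c (d * cs.simple i) * c (cs.simple i) := by
    have := hc.map_mul_simple_of_not_isRightDescent
      (cs.isRightDescent_iff_not_isRightDescent_mul.mp h)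
    rwa [simple_mul_simple_cancel_right] at this
  rw [hd, mul_assoc, hc.map_simple_mul_self]

theorem map_simple_mul_map_simple_mul (i : B) (w : W) :
    c (cs.simple i) * c (cs.simple i * w) = c (cs.simple i) * c w := by
  by_cases h : cs.IsLeftDescent w i
  · have hw : c w = c (cs.simple i) * c (cs.simple i * w) := by
      have := hc.map_simple_mul_of_not_isLeftDescent
        (cs.isLeftDescent_iff_not_isLeftDescent_mul.mp h)
      rwa [simple_mul_simple_cancel_left] at this
    rw [hw, ← mul_assoc, hc.map_simple_mul_self]
  · rw [hc.map_simple_mul_of_not_isLeftDescent h, ← mul_assoc, hc.map_simple_mul_self]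

theorem map_mul_map_mul_of_mem_closure {d : W} {I : Set B}
    (hI : ∀ i ∈ I, cs.IsRightDescent d i) {a : W}
    (ha : a ∈ Subgroup.closure (cs.simple '' I)) (w : W) :
    c d * c (a * w) = c d * c w := by
  induction ha using Subgroup.closure_induction generalizing w with
  | mem x hx =>
    obtain ⟨i, hi, rfl⟩ := hx
    rw [← hc.map_mul_map_simple_of_isRightDescent (hI i hi), mul_assoc, mul_assoc,
      hc.map_simple_mul_map_simple_mul]
  | one => rw [one_mul]
  | mul x y _ _ hx hy => rw [mul_assoc, hx, hy]
  | inv x _ hx => rw [← hx, mul_inv_cancel_left]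

theorem map_mul_map_eq_left_of_mem_closure {d : W} {I : Set B}
    (hI : ∀ i ∈ I, cs.IsRightDescent d i) {a : W}
    (ha : a ∈ Subgroup.closure (cs.simple '' I)) : c d * c a = c d := by
  simpa [hc.map_one] using hc.map_mul_map_mul_of_mem_closure hI ha 1

theorem map_mul_mul_map_of_mem_closure {d : W} {I : Set B}
    (hI : ∀ i ∈ I, cs.IsLeftDescent d i) {a : W}
    (ha : a ∈ Subgroup.closure (cs.simple '' I)) (w : W) :
    c (w * a) * c d = c w * c d := by
  have hI' : ∀ i ∈ I, cs.IsRightDescent d⁻¹ i := fun i hi =>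
    cs.isRightDescent_inv_iff.mpr (hI i hi)
  have := hc.op.map_mul_map_mul_of_mem_closure hI' (inv_mem ha) w⁻¹
  simpa [← MulOpposite.op_mul] using this

theorem map_mul_map_eq_right_of_mem_closure {d : W} {I : Set B}
    (hI : ∀ i ∈ I, cs.IsLeftDescent d i) {a : W}
    (ha : a ∈ Subgroup.closure (cs.simple '' I)) : c a * c d = c d := by
  simpa [hc.map_one] using hc.map_mul_mul_map_of_mem_closure hI ha 1

end IsZeroHeckeMap

end CoxeterSystem

namespace ZeroHeckeData

variable {B W : Type} [Group W] {M : CoxeterMatrix B} {cs : CoxeterSystem M W}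
  {H : Type} [Ring H] [Algebra ℤ H] (hd : ZeroHeckeData cs H)

theorem T_simple_mul_self (i : B) :
    hd.T (cs.simple i) * hd.T (cs.simple i) = -hd.T (cs.simple i) :=
  hd.T_mul_of_lt i _ (by simp [cs.simple_mul_simple_self, cs.length_simple])

theorem isZeroHeckeMap {c : W → H}
    (hc : ∀ (w : W) (ω : List B), cs.wordProd ω = w → cs.IsReduced ω →
      c w = (ω.map (fun i => hd.T (cs.simple i) + 1)).prod) :
    cs.IsZeroHeckeMap c where
  map_one := by simpa using hc 1 [] cs.wordProd_nil (by simp [CoxeterSystem.IsReduced])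
  map_mul_of_length_add x y h := by
    obtain ⟨ωx, hx, rfl⟩ := cs.exists_isReduced x
    obtain ⟨ωy, hy, rfl⟩ := cs.exists_isReduced y
    have hxy : cs.IsReduced (ωx ++ ωy) := by
      rw [CoxeterSystem.IsReduced, cs.wordProd_append, h, hx.eq, hy.eq, List.length_append]
    rw [hc _ ωx rfl hx, hc _ ωy rfl hy, hc _ _ (cs.wordProd_append ωx ωy) hxy,
      List.map_append, List.prod_append]
  map_simple_mul_self i := by
    have hs : c (cs.simple i) = hd.T (cs.simple i) + 1 := by
      simpa using hc _ [i] (by simp) (by simp [CoxeterSystem.IsReduced, cs.length_simple])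
    rw [hs]
    calc (hd.T (cs.simple i) + 1) * (hd.T (cs.simple i) + 1)
        = hd.T (cs.simple i) * hd.T (cs.simple i) + hd.T (cs.simple i)
          + hd.T (cs.simple i) + 1 := by noncomm_ring
      _ = hd.T (cs.simple i) + 1 := by rw [hd.T_simple_mul_self]; abel

end ZeroHeckeData

theorem stmt16_general {B W : Type} [Group W] {M : CoxeterMatrix B} (cs : CoxeterSystem M W)
    (H : Type) [Ring H] [Algebra ℤ H] (hd : ZeroHeckeData cs H)
    (c : W → H)
    (hc : ∀ (w : W) (ω : List B), cs.wordProd ω = w → cs.IsReduced ω →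
      c w = (ω.map (fun i => hd.T (cs.simple i) + 1)).prod)
    (I J : Set B)
    (WI WJ : Subgroup W)
    (hWI : WI = Subgroup.closure (cs.simple '' I))
    (hWJ : WJ = Subgroup.closure (cs.simple '' J))
    (wI wJ wIJ : W)
    (hwI : wI ∈ WI ∧ ∀ u ∈ WI, cs.length u ≤ cs.length wI)
    (hwJ : wJ ∈ WJ ∧ ∀ u ∈ WJ, cs.length u ≤ cs.length wJ)
    (hwIJ : wIJ ∈ (WI : Set W) * (WJ : Set W) ∧
      ∀ u ∈ (WI : Set W) * (WJ : Set W), cs.length u ≤ cs.length wIJ) :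
    c wI * c wJ = c wIJ := by
  have hc := hd.isZeroHeckeMap hc
  obtain ⟨hwI, hwI_max⟩ := hwI
  obtain ⟨hwJ, hwJ_max⟩ := hwJ
  obtain ⟨⟨a, ha, b, hb, hab : a * b = wIJ⟩, hwIJ_max⟩ := hwIJ
  have hsI : ∀ i ∈ I, cs.simple i ∈ WI := fun i hi => hWI ▸ Subgroup.subset_closure ⟨i, hi, rfl⟩
  have hsJ : ∀ j ∈ J, cs.simple j ∈ WJ := fun j hj => hWJ ▸ Subgroup.subset_closure ⟨j, hj, rfl⟩
  have hdI : ∀ i ∈ I, cs.IsRightDescent wI i := fun i hi =>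
    cs.isRightDescent_of_length_mul_simple_le (hwI_max _ (mul_mem hwI (hsI i hi)))
  have hdJ : ∀ j ∈ J, cs.IsLeftDescent wJ j := fun j hj =>
    cs.isLeftDescent_of_length_simple_mul_le (hwJ_max _ (mul_mem (hsJ j hj) hwJ))
  have hdIJ : ∀ i ∈ I, cs.IsLeftDescent wIJ i := fun i hi =>
    cs.isLeftDescent_of_length_simple_mul_le <| hwIJ_max _ <| by
      rw [← hab, ← mul_assoc]; exact Set.mul_mem_mul (mul_mem (hsI i hi) ha) hb
  have hdJI : ∀ j ∈ J, cs.IsRightDescent wIJ j := fun j hj =>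
    cs.isRightDescent_of_length_mul_simple_le <| hwIJ_max _ <| by
      rw [← hab, mul_assoc]; exact Set.mul_mem_mul ha (mul_mem hb (hsJ j hj))
  subst hWI hWJ
  calc c wI * c wJ = c wI * (c b * c wJ) := by
        rw [hc.map_mul_map_eq_right_of_mem_closure hdJ hb]
    _ = c wI * c (a * b) * c wJ := by rw [hc.map_mul_map_mul_of_mem_closure hdI ha, mul_assoc]
    _ = c wIJ * c wJ := by rw [hab, hc.map_mul_map_eq_right_of_mem_closure hdIJ hwI]
    _ = c wIJ := hc.map_mul_map_eq_left_of_mem_closure hdJI hwJ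

/-- In the 0-Hecke algebra `H_0`, for finitary subsets `I, J ⊆ S`,
`c_{w_I} · c_{w_J} = c_{w_{I,J}}`, where `w_I, w_J` are the longest elements of the
finite parabolic subgroups `W_I, W_J` and `w_{I,J}` is the longest element of the
double coset `W_I W_J`.  Here `c_w` is defined via reduced expressions. -/
theorem stmt16 {B W : Type} [Group W] {M : CoxeterMatrix B} (cs : CoxeterSystem M W)
    (H : Type) [Ring H] [Algebra ℤ H] (hd : ZeroHeckeData cs H)
    (c : W → H)
    (hc : ∀ (w : W) (ω : List B), cs.wordProd ω = w → cs.IsReduced ω →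
      c w = (ω.map (fun i => hd.T (cs.simple i) + 1)).prod)
    (I J : Set B)
    (WI WJ : Subgroup W)
    (hWI : WI = Subgroup.closure (cs.simple '' I))
    (hWJ : WJ = Subgroup.closure (cs.simple '' J))
    (hfinI : Set.Finite (WI : Set W)) (hfinJ : Set.Finite (WJ : Set W))
    (wI wJ wIJ : W)
    (hwI : wI ∈ WI ∧ ∀ u ∈ WI, cs.length u ≤ cs.length wI)
    (hwJ : wJ ∈ WJ ∧ ∀ u ∈ WJ, cs.length u ≤ cs.length wJ)
    (hwIJ : wIJ ∈ (WI : Set W) * (WJ : Set W) ∧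
      ∀ u ∈ (WI : Set W) * (WJ : Set W), cs.length u ≤ cs.length wIJ) :
    c wI * c wJ = c wIJ :=
  stmt16_general cs H hd c hc I J WI WJ hWI hWJ wI wJ wIJ hwI hwJ hwIJ
end
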